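/- arXiv:2304.07214 — 9 statements merged into one kernel-verified Lean document; each statement's English description precedes it below -/
import Mathlib

section
/- If there is a cofinal map from an ultrafilter U to an ultrafilter V (both ordered by reverse inclusion), then there is a monotone cofinal map from U to V. -/
/-- A subset `S` is cofinal with respect to the relation `r`. -/
def IsCofinalSet {α : Type*} (r : α → α → Prop) (S : Set α) : Prop :=
  ∀ a, ∃ b ∈ S, r a b

/-- `f` is a cofinal map: images of cofinal sets are cofinal. -/
def IsCofinalMap {α β : Type*} (rQ : β → β → Prop) (rP : α → α → Prop) (f : β → α) : Prop :=
  ∀ S : Set β, IsCofinalSet rQ S → IsCofinalSet rP (f '' S)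

/-- The members of an ultrafilter, as a type, ordered by reverse inclusion:
`A ≤ B` iff `B ⊆ A`. -/
def revIncl {X : Type*} (U : Ultrafilter X) :
    {A : Set X // A ∈ U} → {A : Set X // A ∈ U} → Prop :=
  fun A B => B.1 ⊆ A.1

/-- If there is a cofinal map from the ultrafilter `U` to the ultrafilter `V`
(both ordered by reverse inclusion), then there is a monotone cofinal map from `U` to `V`. -/
theorem exists_monotone_cofinal_map {X Y : Type*} (U : Ultrafilter X) (V : Ultrafilter Y)
    (h : ∃ f : {A : Set X // A ∈ U} → {B : Set Y // B ∈ V},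
      IsCofinalMap (revIncl U) (revIncl V) f) :
    ∃ f : {A : Set X // A ∈ U} → {B : Set Y // B ∈ V},
      (∀ A B, revIncl U A B → revIncl V (f A) (f B)) ∧
      IsCofinalMap (revIncl U) (revIncl V) f := by
  obtain ⟨f, hf⟩ := h
  -- the monotone map: union of f over all members below A
  set g : {A : Set X // A ∈ U} → {B : Set Y // B ∈ V} :=
    fun A => ⟨{y | ∃ A' : {A : Set X // A ∈ U}, A'.1 ⊆ A.1 ∧ y ∈ (f A').1}, by
      refine Filter.mem_of_superset (f A).2 ?_
      intro y hy
      exact ⟨A, subset_rfl, hy⟩⟩ with hg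
  -- key claim: for every B0 there is A0 such that all members below A0 map into B0
  have key : ∀ B0 : {B : Set Y // B ∈ V}, ∃ A0 : {A : Set X // A ∈ U},
      ∀ A' : {A : Set X // A ∈ U}, A'.1 ⊆ A0.1 → (f A').1 ⊆ B0.1 := by
    intro B0
    by_contra hc
    push_neg at hc
    have hS : IsCofinalSet (revIncl U) {A' | ¬ (f A').1 ⊆ B0.1} := by
      intro A
      obtain ⟨A', hsub, hns⟩ := hc A
      exact ⟨A', hns, hsub⟩
    obtain ⟨b, hbmem, hb⟩ := hf _ hS B0
    obtain ⟨A', hA', rfl⟩ := hbmem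
    exact hA' hb
  refine ⟨g, ?_, ?_⟩
  · intro A B hAB y hy
    obtain ⟨A', hsub, hmem⟩ := hy
    exact ⟨A', hsub.trans hAB, hmem⟩
  · intro S hS B0
    obtain ⟨A0, hA0⟩ := key B0
    obtain ⟨A1, hA1S, hA1⟩ := hS A0
    refine ⟨g A1, ⟨A1, hA1S, rfl⟩, ?_⟩
    intro y hy
    obtain ⟨A', hsub, hmem⟩ := hy
    exact hA0 A' (hsub.trans hA1) hmem
end

section
/- Let ⟨A_i : i < λ⟩ be a κ-independent family of subsets of κ, let ω ≤ μ ≤ κ, and let U be an ultrafilter on κ extending the filter generated by { (⋃_{i∈I} A_i) \ (⋃_{j∈J} A_j) : |I| = μ, |J| < μ }. Then the family ⟨κ \ A_i : i < λ⟩ witnesses ¬Gal(U, μ, λ): each κ \ A_i ∈ U, but for every I ∈ [λ]^μ, ⋂_{i∈I}(κ \ A_i) ∉ U. -/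
universe u

open Cardinal

/-- A family `⟨A i : i ∈ L⟩` of subsets of `K` is `κ`-independent (`κ = |K|`) if for all
disjoint index sets `I, J` of size `< κ`, `(⋂_{i∈I} A i) ∩ (⋂_{j∈J} (A j)ᶜ)` is nonempty. -/
def IsIndependentFamily {K L : Type u} (A : L → Set K) : Prop :=
  ∀ I J : Set L, Disjoint I J → #I < #K → #J < #K →
    ((⋂ i ∈ I, A i) ∩ ⋂ j ∈ J, (A j)ᶜ).Nonempty

/-- Let `⟨A i : i < λ⟩` be a `κ`-independent family of subsets of `κ`, `ω ≤ μ ≤ κ ` (and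
`μ ≤ λ`), and let `U` be an ultrafilter on `κ` extending the filter generated by
`{ (⋃_{i∈I} A i) \ (⋃_{j∈J} A j) : |I| = μ, |J| < μ }`.  Then `⟨κ \ A i : i < λ⟩` witnesses
`¬Gal(U, μ, λ)`: each complement is in `U`, but no `μ`-sized subfamily has intersection in `U`. -/
theorem independent_family_not_galvin {K L : Type u} (A : L → Set K)
    (hA : IsIndependentFamily A) (mu : Cardinal.{u})
    (hmu0 : ℵ₀ ≤ mu) (hmuK : mu ≤ #K) (hmuL : mu ≤ #L)
    (U : Ultrafilter K)
    (hU : ∀ I J : Set L, #I = mu → #J < mu →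
      ((⋃ i ∈ I, A i) \ ⋃ j ∈ J, A j) ∈ U) :
    (∀ i : L, (A i)ᶜ ∈ U) ∧
      ∀ I : Set L, #I = mu → (⋂ i ∈ I, (A i)ᶜ) ∉ U := by
  obtain ⟨S, hS⟩ := Cardinal.le_mk_iff_exists_set.mp hmuL
  constructor
  · intro i
    have h1 : #({i} : Set L) < mu := by
      simpa using lt_of_lt_of_le Cardinal.one_lt_aleph0 hmu0
    have h := hU S {i} hS h1
    refine U.mem_of_superset h ?_
    intro x hx
    have := hx.2
    simp only [Set.mem_iUnion, Set.mem_singleton_iff, not_exists] at this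
    exact fun hxi => this i rfl hxi
  · intro I hI hmem
    have h0 : #(∅ : Set L) < mu := by
      simpa using lt_of_lt_of_le Cardinal.aleph0_pos hmu0
    have h := hU I ∅ hI h0
    simp only [Set.mem_empty_iff_false, Set.iUnion_of_empty, Set.iUnion_empty,
      Set.diff_empty] at h
    have hc : (⋃ i ∈ I, A i)ᶜ ∈ U := by
      rwa [← Set.compl_iUnion₂] at hmem
    exact (Ultrafilter.compl_mem_iff_notMem.mp hc) h
end

section
/- Suppose U is an ultrafilter on κ, μ ≤ κ, and ¬Gal(U, μ, 2^κ) holds. Then Ch(U) = 2^κ, i.e., every filter base of U has cardinality 2^κ. -/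
universe u

open Cardinal

/-- Suppose `U` is an ultrafilter on `κ` (an infinite set `K`), `μ ≤ κ`, and
`¬Gal(U, μ, 2^κ)` holds, witnessed by the `2^κ`-sequence `⟨A s : s ∈ P(K)⟩` of members of `U`
no `μ` of which have intersection in `U`.  Then `Ch(U) = 2^κ`: every filter base of `U` has
cardinality `2^κ`. -/
theorem ch_eq_two_pow_of_not_galvin {K : Type u} [Infinite K] (U : Ultrafilter K)
    (mu : Cardinal.{u}) (hmu : mu ≤ #K)
    (A : Set K → Set K) (hA : ∀ s, A s ∈ U)
    (hGal : ∀ I : Set (Set K), #I = mu → (⋂ s ∈ I, A s) ∉ U) :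
    ∀ B : Set (Set K), (∀ b ∈ B, b ∈ U) → (∀ X ∈ U, ∃ b ∈ B, b ⊆ X) →
      #B = 2 ^ #K := by
  intro B hB1 hB2
  -- choose for each s a base element below A s
  have hch : ∀ s : Set K, ∃ b : B, (b : Set K) ⊆ A s := by
    intro s
    obtain ⟨b, hb, hbs⟩ := hB2 (A s) (hA s)
    exact ⟨⟨b, hb⟩, hbs⟩
  choose f hf using hch
  -- every fiber of f has cardinality < mu
  have hfib : ∀ b : B, #{s : Set K | f s = b} < mu := by
    intro b
    by_contra h
    push_neg at h
    obtain ⟨I, hIsub, hI⟩ := Cardinal.le_mk_iff_exists_subset.mp h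
    refine hGal I hI ?_
    refine Filter.mem_of_superset (hB1 b b.2) ?_
    intro x hx
    simp only [Set.mem_iInter]
    intro s hs
    have : f s = b := hIsub hs
    exact hf s (this ▸ hx)
  -- Set K is the union of the fibers
  have hcover : (Set.univ : Set (Set K)) = ⋃ b : B, {s : Set K | f s = b} := by
    ext s
    simp only [Set.mem_univ, Set.mem_iUnion, Set.mem_setOf_eq, true_iff]
    exact ⟨f s, rfl⟩
  have hle : (2 : Cardinal.{u}) ^ #K ≤ #B * #K := by
    calc (2 : Cardinal.{u}) ^ #K = #(Set K) := (Cardinal.mk_set).symm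
      _ = #(Set.univ : Set (Set K)) := Cardinal.mk_univ.symm
      _ = #(⋃ b : B, {s : Set K | f s = b}) := by rw [hcover]
      _ ≤ #B * ⨆ b : B, #{s : Set K | f s = b} := Cardinal.mk_iUnion_le _
      _ ≤ #B * #K := by
          refine mul_le_mul_right ?_ _
          exact ciSup_le' fun b => ((hfib b).le.trans hmu)
  have hBK : #B * #K ≤ max (#B) (#K) := by
    exact (Cardinal.mul_le_max _ _).trans
      (max_le le_rfl (le_max_of_le_right (Cardinal.aleph0_le_mk K)))
  have hmax : (2 : Cardinal.{u}) ^ #K ≤ max (#B) (#K) := hle.trans hBK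
  have hK2 : #K < 2 ^ #K := Cardinal.cantor _
  have hBge : (2 : Cardinal.{u}) ^ #K ≤ #B := by
    rcases max_cases (#B) (#K) with ⟨h1, _⟩ | ⟨h1, _⟩
    · rwa [h1] at hmax
    · rw [h1] at hmax; exact absurd hmax (not_le.mpr hK2)
  have hBle : #B ≤ 2 ^ #K := by
    calc #B ≤ #(Set K) := Cardinal.mk_set_le B
      _ = 2 ^ #K := Cardinal.mk_set
  exact le_antisymm hBle hBge
end

section
/- Let κ be an uncountable regular cardinal, U a κ-complete ultrafilter on κ, and π : κ → κ a function that is least non-constant mod U (i.e., π is not constant on any set in U, and for every f : κ → κ with {α : f(α) < π(α)} ∈ U, f is constant on a set in U). Then for any sequence ⟨A_i : i < κ⟩ of members of U, the modified diagonal intersection Δ*_{i<κ} A_i := { α < κ : ∀ i < π(α), α ∈ A_i } belongs to U. -/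
universe u

open Cardinal

/-- Let `κ` be an uncountable regular cardinal (realized as a linearly ordered set `K`),
`U` a `κ`-complete ultrafilter on `κ`, and `π : κ → κ` least non-constant mod `U`.
Then for any sequence `⟨A i : i < κ⟩` of members of `U`, the modified diagonal intersection
`Δ*_{i<κ} A i = { α : ∀ i < π α, α ∈ A i }` belongs to `U`. -/
theorem modified_diagonal_mem {K : Type u} [LinearOrder K]
    (hreg : (#K).IsRegular) (hunc : ℵ₀ < #K)
    (U : Ultrafilter K)
    (hcomp : ∀ S : Set (Set K), #S < #K → (∀ A ∈ S, A ∈ U) → ⋂₀ S ∈ U)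
    (pi : K → K)
    (hpi1 : ∀ c : K, {α | pi α = c} ∉ U)
    (hpi2 : ∀ f : K → K, {α | f α < pi α} ∈ U → ∃ c, {α | f α = c} ∈ U) :
    ∀ A : K → Set K, (∀ i, A i ∈ U) →
      {α : K | ∀ i, i < pi α → α ∈ A i} ∈ U := by
  intro A hA
  by_contra hB
  rw [← Ultrafilter.compl_notMem_iff, not_not] at hB
  -- on the complement, choose a witness index
  have hwit : ∀ α ∈ {α : K | ∀ i, i < pi α → α ∈ A i}ᶜ, ∃ i, i < pi α ∧ α ∉ A i := by
    intro α hα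
    simp only [Set.mem_compl_iff, Set.mem_setOf_eq, not_forall] at hα
    obtain ⟨i, hi, hni⟩ := hα
    exact ⟨i, hi, hni⟩
  classical
  set f : K → K := fun α =>
    if h : ∀ i, i < pi α → α ∈ A i then α else (hwit α h).choose with hf
  have hflt : {α | f α < pi α} ∈ U := by
    apply Filter.mem_of_superset hB
    intro α hα
    have hα' : ¬ ∀ i, i < pi α → α ∈ A i := hα
    simp only [Set.mem_setOf_eq, hf]
    rw [dif_neg hα']
    exact (hwit α hα).choose_spec.1
  obtain ⟨c, hc⟩ := hpi2 f hflt
  have hsub : {α | f α = c} ∩ {α : K | ∀ i, i < pi α → α ∈ A i}ᶜ ⊆ (A c)ᶜ := by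
    rintro α ⟨hfc, hα⟩
    have hα' : ¬ ∀ i, i < pi α → α ∈ A i := hα
    simp only [Set.mem_setOf_eq, hf] at hfc
    rw [dif_neg hα'] at hfc
    rw [← hfc]
    exact (hwit α hα).choose_spec.2
  have := Filter.mem_of_superset (Filter.inter_mem hc hB) hsub
  exact (Ultrafilter.compl_notMem_iff.mpr (hA c)) this
end

section
/- Let κ be a measurable cardinal and U a κ-complete ultrafilter on κ. Then the κ-fold power ∏_{i<κ} U (with everywhere-domination order, i.e., ⟨A_i⟩ ≤ ⟨B_i⟩ iff A_i ⊇ B_i for all i) is Tukey reducible to U. Consequently ∏_{i<κ} U ≡_T U. -/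
universe u

open Cardinal

/-- The everywhere-domination (coordinatewise reverse inclusion) order on the `κ`-fold
power `∏_{i<κ} U`. -/
def powRel {X : Type*} (U : Ultrafilter X) :
    (X → {A : Set X // A ∈ U}) → (X → {A : Set X // A ∈ U}) → Prop :=
  fun g g' => ∀ i, (g' i).1 ⊆ (g i).1

/-- Let `κ` be a measurable cardinal (realized as a well-ordered set `K` of regular
uncountable cardinality) and `U` a (uniform) `κ`-complete ultrafilter on `κ`.  Then
`∏_{i<κ} U ≤_T U`, and consequently `∏_{i<κ} U ≡_T U`: there are cofinal maps both from
`U` to `∏_{i<κ} U` and from `∏_{i<κ} U` to `U`. -/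
theorem power_tukey_equiv {K : Type u} [LinearOrder K] [WellFoundedLT K]
    (hreg : (#K).IsRegular) (hunc : ℵ₀ < #K)
    (U : Ultrafilter K)
    (hcomp : ∀ S : Set (Set K), #S < #K → (∀ A ∈ S, A ∈ U) → ⋂₀ S ∈ U)
    (huni : ∀ A ∈ U, #A = #K) :
    (∃ f : {A : Set K // A ∈ U} → (K → {A : Set K // A ∈ U}),
      IsCofinalMap (revIncl U) (powRel U) f) ∧
    (∃ g : (K → {A : Set K // A ∈ U}) → {A : Set K // A ∈ U},
      IsCofinalMap (powRel U) (revIncl U) g) := by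
  classical
  -- `O` is the cardinal `#K` realized as its initial ordinal: proper initial segments small
  set O : Type u := (#K).ord.ToType with hO
  obtain ⟨ι⟩ : Nonempty (K ≃ O) := by
    rw [← Cardinal.eq, hO, Cardinal.mk_toType, Cardinal.card_ord]
  -- non-constant mod U
  set NC : (K → O) → Prop := fun h => ∀ c, {x | h x = c} ∉ U with hNC
  set lt' : (K → O) → (K → O) → Prop := fun h h' => {x | h x < h' x} ∈ U with hlt'
  have hιNC : NC (fun x => ι x) := by
    intro c hc
    have h1 := huni _ hc
    have h2 : {x | ι x = c} = {ι.symm c} := by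
      ext x; simp [Equiv.apply_eq_iff_eq_symm_apply]
    rw [h2, Cardinal.mk_singleton] at h1
    exact (Cardinal.one_lt_aleph0.trans hunc).ne h1
  -- there is a `<ᵤ`-minimal non-constant function π
  have key : ∃ π, NC π ∧ ∀ h, NC h → ¬ lt' h π := by
    by_contra hno
    push_neg at hno
    have step : ∀ p : {h : K → O // NC h}, ∃ q : {h : K → O // NC h}, lt' q.1 p.1 := by
      rintro ⟨p, hp⟩
      obtain ⟨h, h1, h2⟩ := hno p hp
      exact ⟨⟨h, h1⟩, h2⟩
    choose F hF using step
    set f : ℕ → {h : K → O // NC h} := fun n => F^[n] ⟨fun x => ι x, hιNC⟩ with hf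
    have hdesc : ∀ n, lt' (f (n + 1)).1 (f n).1 := by
      intro n
      have : f (n + 1) = F (f n) := by
        rw [hf]; exact Function.iterate_succ_apply' F n _
      rw [this]; exact hF (f n)
    set T : ℕ → Set K := fun n => {x | (f (n + 1)).1 x < (f n).1 x} with hT
    have hTU : ⋂₀ Set.range T ∈ U := by
      refine hcomp _ (lt_of_le_of_lt ?_ hunc) ?_
      · exact (Set.countable_range T).le_aleph0
      · rintro A ⟨n, rfl⟩; exact hdesc n
    obtain ⟨x, hx⟩ := Filter.nonempty_of_mem (U.toFilter.sets_of_superset hTU (le_refl _))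
    have hxall : ∀ n, (f (n + 1)).1 x < (f n).1 x := fun n =>
      Set.mem_sInter.mp hx _ ⟨n, rfl⟩
    exact (RelEmbedding.natGT (fun n => (f n).1 x) hxall).not_wellFounded
      (wellFounded_lt)
  obtain ⟨π, hπNC, hπmin⟩ := key
  -- the complement of each "bounded" set is in U
  have hBig : ∀ a : O, {x | a < π x} ∈ U := by
    intro a
    have hcard : #((fun b => {x | π x ≠ b}) '' Set.Iic a) < #K := by
      refine lt_of_le_of_lt Cardinal.mk_image_le ?_
      have h1 : (Set.Iic a) = insert a (Set.Iio a) := by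
        ext b; simp [le_iff_lt_or_eq, or_comm]
      rw [h1]
      refine lt_of_le_of_lt Cardinal.mk_insert_le ?_
      exact Cardinal.add_lt_of_lt hunc.le (Cardinal.mk_Iio_ord_toType a)
        (Cardinal.one_lt_aleph0.trans hunc)
    have hmem : ∀ A ∈ (fun b => {x | π x ≠ b}) '' Set.Iic a, A ∈ U := by
      rintro A ⟨b, _, rfl⟩
      exact Ultrafilter.compl_mem_iff_notMem.mpr (hπNC b)
    have h2 := hcomp _ hcard hmem
    have h3 : ⋂₀ ((fun b => {x | π x ≠ b}) '' Set.Iic a) = {x | a < π x} := by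
      ext x
      simp only [Set.sInter_image, Set.mem_iInter, Set.mem_Iic, Set.mem_setOf_eq]
      constructor
      · intro h
        by_contra hle
        exact h (π x) (not_lt.mp hle) rfl
      · intro h b hb
        exact fun he => absurd (he ▸ hb) (not_le.mpr h)
    rwa [h3] at h2
  constructor
  · -- the cofinal map from U to the power
    refine ⟨fun A i => ⟨A.1 ∩ {x | ι i < π x}, Filter.inter_mem A.2 (hBig (ι i))⟩, ?_⟩
    intro S hS g
    set D : Set K := {x | ∀ a : O, a < π x → x ∈ (g (ι.symm a)).1} with hDdef
    have hD : D ∈ U := by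
      by_contra hD
      rw [← Ultrafilter.compl_mem_iff_notMem] at hD
      have hne : ∀ x ∈ Dᶜ, {a : O | a < π x ∧ x ∉ (g (ι.symm a)).1}.Nonempty := by
        intro x hx
        simp only [hDdef, Set.mem_compl_iff, Set.mem_setOf_eq, not_forall] at hx
        obtain ⟨a, ha1, ha2⟩ := hx
        exact ⟨a, ha1, ha2⟩
      set h : K → O := fun x =>
        if hx : {a : O | a < π x ∧ x ∉ (g (ι.symm a)).1}.Nonempty then
          (wellFounded_lt).min _ hx else π x with hh
      have hhlt : lt' h π := by
        refine U.toFilter.sets_of_superset hD ?_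
        intro x hx
        have hne' := hne x hx
        show h x < π x
        rw [hh]; simp only [dif_pos hne']
        exact ((wellFounded_lt).min_mem _ hne').1
      have hnNC : ¬ NC h := fun hNCh => hπmin h hNCh hhlt
      rw [hNC] at hnNC
      obtain ⟨c, hc⟩ := not_forall.mp hnNC
      rw [not_not] at hc
      have hsub : {x | h x = c} ∩ Dᶜ ⊆ ((g (ι.symm c)).1)ᶜ := by
        rintro x ⟨hxc, hxD⟩
        have hne' := hne x hxD
        have hmin := (wellFounded_lt).min_mem _ hne'
        have : h x = (wellFounded_lt).min _ hne' := by rw [hh]; simp only [dif_pos hne']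
        have hxc' : h x = c := hxc
        rw [this] at hxc'
        rw [hxc'] at hmin
        exact hmin.2
      have : ((g (ι.symm c)).1)ᶜ ∈ U :=
        U.toFilter.sets_of_superset (Filter.inter_mem hc hD) hsub
      exact Ultrafilter.compl_mem_iff_notMem.mp this (g (ι.symm c)).2
    obtain ⟨A, hAS, hAD⟩ := hS ⟨D, hD⟩
    refine ⟨_, Set.mem_image_of_mem _ hAS, ?_⟩
    intro i x hx
    obtain ⟨hxA, hxπ⟩ := hx
    have hxD : x ∈ D := hAD hxA
    have := hxD (ι i) hxπ
    simpa using this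
  · -- the easy direction: evaluation at a point
    have : Nonempty K := by
      rw [← Cardinal.mk_ne_zero_iff]
      exact ne_of_gt (lt_trans Cardinal.aleph0_pos hunc)
    obtain ⟨i0⟩ := this
    refine ⟨fun h => h i0, ?_⟩
    intro S hS A
    obtain ⟨b, hbS, hb⟩ := hS (fun _ => A)
    exact ⟨b i0, Set.mem_image_of_mem _ hbS, hb i0⟩
end

section
/- Let κ be a measurable cardinal and U, V two κ-complete ultrafilters on κ. Then the Fubini product U·V is Tukey equivalent to the cartesian product U × V. -/
universe u

open Cardinal

/-- Membership in the Fubini product `U · V`. -/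
def FubiniMem {X : Type*} (U V : Ultrafilter X) (A : Set (X × X)) : Prop :=
  {α | {β | (α, β) ∈ A} ∈ V} ∈ U

/-- Reverse inclusion on the members of the Fubini product `U · V`. -/
def fubRel {X : Type*} (U V : Ultrafilter X) :
    {A : Set (X × X) // FubiniMem U V A} → {A : Set (X × X) // FubiniMem U V A} → Prop :=
  fun A B => B.1 ⊆ A.1

/-- Coordinatewise reverse inclusion on the cartesian product `U × V`. -/
def prodRel {X : Type*} (U V : Ultrafilter X) :
    ({A : Set X // A ∈ U} × {B : Set X // B ∈ V}) →
    ({A : Set X // A ∈ U} × {B : Set X // B ∈ V}) → Prop :=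
  fun p q => q.1.1 ⊆ p.1.1 ∧ q.2.1 ⊆ p.2.1

theorem exists_minimal_unbounded {K : Type u} (r : K → K → Prop) [IsWellOrder K r]
    (V : Ultrafilter K)
    (hid : ∀ ξ : K, {β | r ξ β} ∈ V)
    (hcount : ∀ f : ℕ → Set K, (∀ n, f n ∈ V) → (⋂ n, f n) ∈ V) :
    ∃ h : K → K, (∀ ξ, {β | r ξ (h β)} ∈ V) ∧
      ∀ g : K → K, (∀ ξ, {β | r ξ (g β)} ∈ V) → {β | r (g β) (h β)} ∉ V := by
  by_contra hcon
  push_neg at hcon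
  choose F hF1 hF2 using hcon
  let seq : ℕ → {g : K → K // ∀ ξ, {β | r ξ (g β)} ∈ V} := fun n =>
    Nat.rec ⟨id, hid⟩ (fun _ p => ⟨F p.1 p.2, hF1 p.1 p.2⟩) n
  have hstep : ∀ n, {β | r ((seq (n+1)).1 β) ((seq n).1 β)} ∈ V := fun n =>
    hF2 (seq n).1 (seq n).2
  have hM : (⋂ n, {β | r ((seq (n+1)).1 β) ((seq n).1 β)}) ∈ V := hcount _ hstep
  obtain ⟨β, hβ⟩ := Ultrafilter.nonempty_of_mem hM
  have hd : ∀ n, r ((seq (n+1)).1 β) ((seq n).1 β) := fun n => Set.mem_iInter.1 hβ n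
  have wf : WellFounded r := IsWellFounded.wf
  have hne : (Set.range fun n => (seq n).1 β).Nonempty := ⟨(seq 0).1 β, ⟨0, rfl⟩⟩
  obtain ⟨n, hn⟩ := wf.min_mem (Set.range fun n => (seq n).1 β) hne
  exact wf.not_lt_min (Set.range fun n => (seq n).1 β) ⟨n+1, rfl⟩ (hn ▸ hd n)

/-- Let `κ` be a measurable cardinal (realized as a well-ordered set `K` of regular
uncountable cardinality) and `U, V` two (uniform) `κ`-complete ultrafilters on `κ`.  Then the
Fubini product `U · V` is Tukey equivalent to the cartesian product `U × V`: there are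
cofinal maps in both directions. -/
theorem fubini_equiv_cartesian {K : Type u} [LinearOrder K] [WellFoundedLT K]
    (hreg : (#K).IsRegular) (hunc : ℵ₀ < #K)
    (U V : Ultrafilter K)
    (hcompU : ∀ S : Set (Set K), #S < #K → (∀ A ∈ S, A ∈ U) → ⋂₀ S ∈ U)
    (hcompV : ∀ S : Set (Set K), #S < #K → (∀ A ∈ S, A ∈ V) → ⋂₀ S ∈ V)
    (huniU : ∀ A ∈ U, #A = #K) (huniV : ∀ A ∈ V, #A = #K) :
    (∃ f : ({A : Set K // A ∈ U} × {B : Set K // B ∈ V}) →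
        {A : Set (K × K) // FubiniMem U V A},
      IsCofinalMap (prodRel U V) (fubRel U V) f) ∧
    (∃ g : {A : Set (K × K) // FubiniMem U V A} →
        ({A : Set K // A ∈ U} × {B : Set K // B ∈ V}),
      IsCofinalMap (fubRel U V) (prodRel U V) g) := by
  classical
  -- small sets are not in V
  have hsmallV : ∀ T : Set K, #T < #K → Tᶜ ∈ V := by
    intro T hT
    rw [Ultrafilter.compl_mem_iff_notMem]
    intro hTV
    exact absurd (huniV T hTV) hT.ne
  -- countable completeness of V
  have hcount : ∀ f : ℕ → Set K, (∀ n, f n ∈ V) → (⋂ n, f n) ∈ V := by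
    intro f hf
    have hS : #(Set.range f) < #K :=
      lt_of_le_of_lt (Set.countable_range f).le_aleph0 hunc
    have := hcompV (Set.range f) hS (by rintro _ ⟨n, rfl⟩; exact hf n)
    rwa [Set.sInter_range] at this
  -- a wellorder of K of type (#K).ord
  obtain ⟨r, wo, hr⟩ := Cardinal.ord_eq K
  haveI := wo
  have wf : WellFounded r := IsWellFounded.wf
  -- initial segments of r are small
  have hseg : ∀ ξ : K, #({α | r α ξ ∨ α = ξ} : Set K) < #K := by
    intro ξ
    have h1 : #({α | r α ξ} : Set K) < #K := by
      have h0 : #({α | r α ξ} : Set K) = (Ordinal.typein r ξ).card :=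
        Ordinal.card_typein ξ
      rw [h0]
      exact Cardinal.card_typein_lt (r := r) ξ hr
    have he : ({α | r α ξ ∨ α = ξ} : Set K) = insert ξ {α | r α ξ} := by
      ext α
      simp only [Set.mem_insert_iff, Set.mem_setOf_eq]
      exact or_comm
    rw [he]
    calc #(insert ξ {α | r α ξ} : Set K) ≤ #({α | r α ξ} : Set K) + 1 := Cardinal.mk_insert_le
      _ < #K := Cardinal.add_lt_of_lt hreg.aleph0_le h1 (lt_trans one_lt_aleph0 hunc)
  -- cobounded sets are in V
  have hid : ∀ ξ : K, {β | r ξ β} ∈ V := by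
    intro ξ
    have he : {β | r ξ β} = ({α | r α ξ ∨ α = ξ} : Set K)ᶜ := by
      ext β
      constructor
      · intro hβ
        rintro (h | rfl)
        · exact wf.asymmetric _ _ hβ h
        · exact wf.asymmetric _ _ hβ hβ
      · intro hβ
        rcases trichotomous_of r β ξ with h | h | h
        · exact absurd (Or.inl h) hβ
        · exact absurd (Or.inr h) hβ
        · exact h
    rw [he]
    exact hsmallV _ (hseg ξ)
  obtain ⟨h, hP, hmin⟩ := exists_minimal_unbounded r V hid hcount
  constructor
  · -- the hard direction: product → Fubini
    refine ⟨fun p => ⟨{q : K × K | q.1 ∈ p.1.1 ∧ q.2 ∈ p.2.1 ∧ r q.1 (h q.2)}, ?_⟩, ?_⟩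
    · refine Filter.mem_of_superset p.1.2 ?_
      intro α hα
      exact Filter.mem_of_superset (Filter.inter_mem p.2.2 (hP α))
        (fun β hβ => ⟨hα, hβ.1, hβ.2⟩)
    · intro S hS C
      set C' : K → Set K := fun α =>
        if {β | (α, β) ∈ C.1} ∈ V then {β | (α, β) ∈ C.1} else Set.univ with hC'def
      have hC' : ∀ α, C' α ∈ V := by
        intro α
        by_cases hα : {β | (α, β) ∈ C.1} ∈ V
        · simpa only [hC'def, if_pos hα] using hα
        · simp only [hC'def, if_neg hα]
          exact Filter.univ_mem
      set B₀ : Set K := {β | ∀ α, r α (h β) → β ∈ C' α} with hB₀def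
      have hB₀ : B₀ ∈ V := by
        by_contra hB
        have hBc : B₀ᶜ ∈ V := (Ultrafilter.compl_mem_iff_notMem).2 hB
        have hBc' : ∀ β ∈ B₀ᶜ, ∃ α, r α (h β) ∧ β ∉ C' α := by
          intro β hβ
          simpa [hB₀def, not_forall] using hβ
        set g : K → K := fun β =>
          if hb : ∃ α, r α (h β) ∧ β ∉ C' α then hb.choose else h β with hgdef
        have hg1 : ∀ β ∈ B₀ᶜ, r (g β) (h β) ∧ β ∉ C' (g β) := by
          intro β hβ
          have hb := hBc' β hβ
          simp only [hgdef, dif_pos hb]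
          exact hb.choose_spec
        have hgG : ∀ ξ, {β | r ξ (g β)} ∈ V := by
          intro ξ
          have hW : ⋂₀ (C' '' {α | r α ξ ∨ α = ξ}) ∈ V :=
            hcompV _ (lt_of_le_of_lt Cardinal.mk_image_le (hseg ξ))
              (by rintro _ ⟨α, _, rfl⟩; exact hC' α)
          have hT : (⋂₀ (C' '' {α | r α ξ ∨ α = ξ}) ∩ (B₀ᶜ ∩ {β | r ξ (h β)})) ∈ V :=
            Filter.inter_mem hW (Filter.inter_mem hBc (hP ξ))
          refine Filter.mem_of_superset hT ?_
          rintro β ⟨hW', hBcβ, hξβ⟩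
          have hgβ := hg1 β hBcβ
          rcases trichotomous_of r (g β) ξ with hlt | heq | hgt
          · exact absurd (hW' _ ⟨g β, Or.inl hlt, rfl⟩) hgβ.2
          · exact absurd (hW' _ ⟨g β, Or.inr heq, rfl⟩) hgβ.2
          · exact hgt
        have hfin : {β | r (g β) (h β)} ∈ V :=
          Filter.mem_of_superset hBc (fun β hβ => (hg1 β hβ).1)
        exact hmin g hgG hfin
      have hA₀ : {α | {β | (α, β) ∈ C.1} ∈ V} ∈ U := C.2
      obtain ⟨⟨A, B⟩, hABS, hAB⟩ := hS (⟨{α | {β | (α, β) ∈ C.1} ∈ V}, hA₀⟩, ⟨B₀, hB₀⟩)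
      refine ⟨_, ⟨(A, B), hABS, rfl⟩, ?_⟩
      rintro ⟨α, β⟩ ⟨hqA, hqB, hqr⟩
      have hαA₀ : α ∈ {α | {β | (α, β) ∈ C.1} ∈ V} := hAB.1 hqA
      have hβB₀ : β ∈ B₀ := hAB.2 hqB
      have hmem : {β' | (α, β') ∈ C.1} ∈ V := hαA₀
      have hthis : β ∈ C' α := hβB₀ α hqr
      have heq : C' α = {β' | (α, β') ∈ C.1} := by
        simp only [hC'def]
        exact if_pos hmem
      rw [heq] at hthis
      exact hthis
  · -- the easy direction: Fubini → product
    have hDne : ∀ C : {A : Set (K × K) // FubiniMem U V A},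
        ({α | {β | (α, β) ∈ C.1} ∈ V}).Nonempty := fun C =>
      Ultrafilter.nonempty_of_mem C.2
    have hwflt : WellFounded ((· < ·) : K → K → Prop) := wellFounded_lt
    set amin : {A : Set (K × K) // FubiniMem U V A} → K := fun C =>
      hwflt.min {α | {β | (α, β) ∈ C.1} ∈ V} (hDne C) with hamindef
    have hamin : ∀ C, {β | (amin C, β) ∈ C.1} ∈ V := fun C =>
      hwflt.min_mem {α | {β | (α, β) ∈ C.1} ∈ V} (hDne C)
    refine ⟨fun C => (⟨{α | {β | (α, β) ∈ C.1} ∈ V}, C.2⟩, ⟨{β | (amin C, β) ∈ C.1}, hamin C⟩),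
      ?_⟩
    intro S hS p
    have hprodmem : FubiniMem U V (p.1.1 ×ˢ p.2.1) := by
      refine Filter.mem_of_superset p.1.2 ?_
      intro α hα
      exact Filter.mem_of_superset p.2.2 (fun β hβ => Set.mem_prod.2 ⟨hα, hβ⟩)
    obtain ⟨C, hCS, hC⟩ := hS ⟨p.1.1 ×ˢ p.2.1, hprodmem⟩
    refine ⟨_, ⟨C, hCS, rfl⟩, ?_, ?_⟩
    · intro α hα
      obtain ⟨β, hβ⟩ := Ultrafilter.nonempty_of_mem (hα : {β | (α, β) ∈ C.1} ∈ V)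
      exact (Set.mem_prod.1 (hC hβ)).1
    · intro β hβ
      exact (Set.mem_prod.1 (hC hβ)).2
end

section
/- Let κ be a measurable cardinal and U a κ-complete ultrafilter on κ. Then for every n ≥ 1, the n-fold Fubini power U^n is Tukey equivalent to U. Consequently, if U satisfies Gal(U, κ, 2^κ) then so does U^n. -/
universe u

open Cardinal

/-- The underlying set of the `(n+1)`-fold Fubini power of an ultrafilter on `K`. -/
def FubType (K : Type u) : ℕ → Type u
  | 0 => K
  | n + 1 => K × FubType K n

/-- Membership in the `(n+1)`-fold Fubini power `U^{n+1}` of `U`. -/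
def FubPow {K : Type u} (U : Ultrafilter K) : (n : ℕ) → Set (Set (FubType K n))
  | 0 => {A | A ∈ U}
  | n + 1 => {A | {α | {x | (α, x) ∈ A} ∈ FubPow U n} ∈ U}

/-- `Gal(W, κ, 2^κ)` for a family `W` of subsets of a set `T` with `2^{|T|} = 2^κ`:
every `2^κ`-sequence of members of `W` has a `κ`-sized subfamily whose intersection is
in `W`. -/
def GalPow {K : Type u} {T : Type u} (W : Set (Set T)) : Prop :=
  ∀ A : Set T → Set T, (∀ s, A s ∈ W) →
    ∃ I : Set (Set T), #I = #K ∧ (⋂ s ∈ I, A s) ∈ W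

section Aux

variable {K : Type u}

lemma mem_fubpow_succ {U : Ultrafilter K} {n : ℕ} {A : Set (FubType K (n + 1))} :
    A ∈ FubPow U (n + 1) ↔ {α | {x | (α, x) ∈ A} ∈ FubPow U n} ∈ U :=
  Iff.rfl

lemma fub_univ (U : Ultrafilter K) : ∀ n, Set.univ ∈ FubPow U n := by
  intro n
  induction n with
  | zero => exact Filter.univ_mem
  | succ n ih =>
    rw [mem_fubpow_succ]
    have h : {α : K | {x : FubType K n | (α, x) ∈ (Set.univ : Set (FubType K (n + 1)))}
        ∈ FubPow U n} = Set.univ := by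
      apply Set.eq_univ_of_forall
      intro α
      have h2 : {x : FubType K n | (α, x) ∈ (Set.univ : Set (FubType K (n + 1)))}
          = Set.univ := Set.eq_univ_of_forall fun x => trivial
      show _ ∈ FubPow U n
      rw [h2]
      exact ih
    rw [h]
    exact Filter.univ_mem

lemma fub_mono (U : Ultrafilter K) : ∀ n, ∀ {A B : Set (FubType K n)},
    A ∈ FubPow U n → A ⊆ B → B ∈ FubPow U n := by
  intro n
  induction n with
  | zero => exact fun hA hAB => Filter.mem_of_superset hA hAB
  | succ n ih =>
    intro A B hA hAB
    rw [mem_fubpow_succ] at hA ⊢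
    apply Filter.mem_of_superset hA
    intro α hα
    exact ih hα (fun x hx => hAB hx)

lemma fub_empty (U : Ultrafilter K) : ∀ n, (∅ : Set (FubType K n)) ∉ FubPow U n := by
  intro n
  induction n with
  | zero => exact Ultrafilter.empty_notMem
  | succ n ih =>
    rw [mem_fubpow_succ]
    intro h
    have h2 : {α : K | {x : FubType K n | (α, x) ∈ (∅ : Set (FubType K (n + 1)))}
        ∈ FubPow U n} = ∅ := by
      ext α
      simp only [Set.mem_setOf_eq, Set.mem_empty_iff_false, iff_false]
      intro hm
      have h3 : {x : FubType K n | (α, x) ∈ (∅ : Set (FubType K (n + 1)))} = ∅ := by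
        ext x; simp; exact fun hx => hx
      have ih' := ih
      rw [← h3] at ih'
      exact ih' hm
    rw [h2] at h
    exact Ultrafilter.empty_notMem h

variable [LinearOrder K] [WellFoundedLT K]

/-- The key diagonalization lemma: there is a family `E α ∈ U` such that for any
family `W α ∈ U`, the "diagonal intersection" `{β | ∀ α, β ∈ E α → β ∈ W α}` is in `U`. -/
lemma exists_diag (hunc : ℵ₀ < #K) (U : Ultrafilter K)
    (hcomp : ∀ S : Set (Set K), #S < #K → (∀ A ∈ S, A ∈ U) → ⋂₀ S ∈ U)
    (huni : ∀ A ∈ U, #A = #K) :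
    ∃ E : K → Set K, (∀ α, E α ∈ U) ∧
      ∀ W : K → Set K, (∀ α, W α ∈ U) →
        {β | ∀ α, β ∈ E α → β ∈ W α} ∈ U := by
  classical
  -- no U-large subsingleton
  have hsing : ∀ A : Set K, A ∈ U → A.Subsingleton → False := by
    intro A hA hsub
    obtain ⟨β₀, hβ₀⟩ := Ultrafilter.nonempty_of_mem hA
    have h1 : A ⊆ {β₀} := fun b hb => hsub hb hβ₀
    have h2 : #A ≤ 1 := by
      calc #A ≤ #({β₀} : Set K) := Cardinal.mk_le_mk_of_subset h1
      _ = 1 := Cardinal.mk_singleton β₀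
    rw [huni A hA] at h2
    exact absurd h2 (not_le.mpr (lt_trans Cardinal.one_lt_aleph0 hunc))
  -- an injective function into the ordinals is non-constant mod U
  obtain ⟨f₀, hf₀⟩ : ∃ f₀ : K → Ordinal.{u}, Function.Injective f₀ := by
    refine ⟨fun β => Ordinal.typein ((· < ·) : K → K → Prop) β, ?_⟩
    intro a b hab
    exact Ordinal.typein_injective _ hab
  have hf₀NC : ∀ c, {β | f₀ β = c} ∉ U := by
    intro c hc
    exact hsing _ hc (fun a ha b hb => hf₀ (ha.trans hb.symm))
  -- the relation "g < f mod U" is well-founded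
  have hwf : WellFounded (fun g h : K → Ordinal.{u} => {β | g β < h β} ∈ U) := by
    haveI : IsIrrefl (K → Ordinal.{u}) (fun g h => {β | g β < h β} ∈ U) := by
      constructor
      intro g hg
      have : {β : K | g β < g β} = ∅ := by
        ext β; simp
      rw [this] at hg
      exact Ultrafilter.empty_notMem hg
    haveI : IsTrans (K → Ordinal.{u}) (fun g h => {β | g β < h β} ∈ U) := by
      constructor
      intro a b c hab hbc
      apply Filter.mem_of_superset (Filter.inter_mem hab hbc)
      rintro β ⟨h1, h2⟩
      simp only [Set.mem_setOf_eq] at h1 h2 ⊢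
      exact lt_trans h1 h2
    haveI : IsStrictOrder (K → Ordinal.{u}) (fun g h => {β | g β < h β} ∈ U) := { }
    rw [RelEmbedding.wellFounded_iff_isEmpty]
    constructor
    intro emb
    set X : ℕ → Set K := fun m => {β | emb (m + 1) β < emb m β} with hXdef
    have hX : ∀ m, X m ∈ U := fun m => emb.map_rel_iff.mpr (Nat.lt_succ_self m)
    have h1 : #(Set.range X) ≤ ℵ₀ := by
      have := Cardinal.mk_range_le_lift (f := X)
      rwa [Cardinal.lift_uzero, Cardinal.mk_nat, Cardinal.lift_aleph0] at this
    obtain ⟨β, hβ⟩ := Ultrafilter.nonempty_of_mem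
      (hcomp _ (lt_of_le_of_lt h1 hunc) (by rintro A ⟨m, rfl⟩; exact hX m))
    have hd : ∀ m, emb (m + 1) β < emb m β := fun m => hβ _ ⟨m, rfl⟩
    obtain ⟨o, ho, hmin⟩ :=
      Ordinal.lt_wf.has_min (Set.range fun m => emb m β) ⟨_, ⟨0, rfl⟩⟩
    obtain ⟨m, rfl⟩ := ho
    exact hmin _ ⟨m + 1, rfl⟩ (hd m)
  -- a minimal non-constant function
  obtain ⟨f, hfNC, hfmin⟩ := hwf.has_min {g : K → Ordinal.{u} | ∀ c, {β | g β = c} ∉ U}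
    ⟨f₀, hf₀NC⟩
  have P2 : ∀ g : K → Ordinal.{u}, {β | g β < f β} ∈ U → ∃ c, {β | g β = c} ∈ U := by
    intro g hg
    by_contra h
    push_neg at h
    exact hfmin g (fun c => h c) hg
  -- least ordinal o* with {f < o*} ∈ U
  have hO : ({o : Ordinal.{u} | {β | f β < o} ∈ U}).Nonempty := by
    refine ⟨Ordinal.lsub f, ?_⟩
    have : {β : K | f β < Ordinal.lsub f} = Set.univ :=
      Set.eq_univ_of_forall fun β => Ordinal.lt_lsub f β
    show _ ∈ U
    rw [this]
    exact Filter.univ_mem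
  obtain ⟨ostar, hostar, homin⟩ := Ordinal.lt_wf.has_min _ hO
  have P1 : ∀ o, o < ostar → {β | o < f β} ∈ U := by
    intro o ho
    have hlt : {β | f β < o} ∉ U := fun hmem => homin o hmem ho
    have h1 : {β | ¬ f β < o} ∈ U := by
      have := Ultrafilter.compl_mem_iff_notMem.mpr hlt
      rwa [Set.compl_setOf] at this
    have h2 : {β | f β ≠ o} ∈ U := by
      have := Ultrafilter.compl_mem_iff_notMem.mpr (hfNC o)
      rwa [Set.compl_setOf] at this
    apply Filter.mem_of_superset (Filter.inter_mem h1 h2)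
    rintro β ⟨hβ1, hβ2⟩
    exact lt_of_le_of_ne (le_of_not_gt hβ1) (Ne.symm hβ2)
  -- injection of K into the ordinals below o*
  obtain ⟨ι⟩ : Nonempty (K ↪ {o : Ordinal.{u} // o < ostar}) := by
    rw [← Cardinal.lift_mk_le']
    by_contra hle
    have hlt : Cardinal.lift.{u} #{o : Ordinal.{u} // o < ostar}
        < Cardinal.lift.{u + 1} #K := lt_of_not_ge hle
    set h : {o : Ordinal.{u} // o < ostar} → Set K := fun o => {β | f β ≠ o.1} with hhdef
    have h2 : Cardinal.lift.{u + 1} #(Set.range h) < Cardinal.lift.{u + 1} #K :=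
      lt_of_le_of_lt Cardinal.mk_range_le_lift hlt
    have h3 : #(Set.range h) < #K := Cardinal.lift_lt.mp h2
    have h4 : ⋂₀ Set.range h ∈ U := by
      apply hcomp _ h3
      rintro A ⟨o, rfl⟩
      have := Ultrafilter.compl_mem_iff_notMem.mpr (hfNC o.1)
      rwa [Set.compl_setOf] at this
    obtain ⟨β, hβ1, hβ2⟩ := Ultrafilter.nonempty_of_mem (Filter.inter_mem h4 hostar)
    exact hβ1 _ ⟨⟨f β, hβ2⟩, rfl⟩ rfl
  refine ⟨fun α => {β | (ι α).1 < f β}, fun α => P1 _ (ι α).2, ?_⟩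
  intro W hW
  by_contra hΔ
  have hX : {β | ∀ α, β ∈ {γ | (ι α).1 < f γ} → β ∈ W α}ᶜ ∈ U :=
    Ultrafilter.compl_mem_iff_notMem.mpr hΔ
  have hXchar : ∀ β ∈ ({β | ∀ α, β ∈ {γ | (ι α).1 < f γ} → β ∈ W α}ᶜ : Set K),
      ∃ α, (ι α).1 < f β ∧ β ∉ W α := by
    intro β hβ
    simp only [Set.mem_compl_iff, Set.mem_setOf_eq] at hβ
    push_neg at hβ
    exact hβ
  set g : K → Ordinal.{u} :=
    fun β => if h : ∃ α, (ι α).1 < f β ∧ β ∉ W α then (ι h.choose).1 else 0 with hgdef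
  have hgf : {β | g β < f β} ∈ U := by
    apply Filter.mem_of_superset hX
    intro β hβ
    obtain ⟨α, hα1, hα2⟩ := hXchar β hβ
    have hex : ∃ α, (ι α).1 < f β ∧ β ∉ W α := ⟨α, hα1, hα2⟩
    show g β < f β
    rw [hgdef]
    simp only [dif_pos hex]
    exact hex.choose_spec.1
  obtain ⟨c, hc⟩ := P2 g hgf
  have hXc := Filter.inter_mem hX hc
  obtain ⟨β₀, hβ₀X, hβ₀c⟩ := Ultrafilter.nonempty_of_mem hXc
  have hex₀ : ∃ α, (ι α).1 < f β₀ ∧ β₀ ∉ W α := hXchar β₀ hβ₀X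
  set αstar := hex₀.choose with hαstar
  have hcval : c = (ι αstar).1 := by
    have : g β₀ = (ι hex₀.choose).1 := by rw [hgdef]; simp only [dif_pos hex₀]
    rw [← hβ₀c, this]
  have hsub : ({β | ∀ α, β ∈ {γ | (ι α).1 < f γ} → β ∈ W α}ᶜ ∩ {β | g β = c})
      ⊆ (W αstar)ᶜ := by
    rintro β ⟨hβX, hβc⟩
    have hex : ∃ α, (ι α).1 < f β ∧ β ∉ W α := hXchar β hβX
    have hg : g β = (ι hex.choose).1 := by rw [hgdef]; simp only [dif_pos hex]
    have : (ι hex.choose).1 = (ι αstar).1 := by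
      rw [← hg, hβc, hcval]
    have heq : hex.choose = αstar := ι.injective (Subtype.ext this)
    rw [← heq]
    exact hex.choose_spec.2
  have : (W αstar)ᶜ ∈ U := Filter.mem_of_superset hXc hsub
  exact (Ultrafilter.compl_mem_iff_notMem.mp this) (hW αstar)

end Aux

/-- Let `κ` be measurable (realized as a well-ordered set `K` of regular uncountable
cardinality) and `U` a (uniform) `κ`-complete ultrafilter on `κ`.  Then every finite Fubini
power `U^n` (`n ≥ 1`; here `FubPow U n = U^{n+1}`) is Tukey equivalent to `U`, and
consequently if `U` satisfies `Gal(U, κ, 2^κ)` then so does `U^n`. -/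
theorem fubini_power_tukey_equiv_and_galvin {K : Type u} [LinearOrder K] [WellFoundedLT K]
    (hreg : (#K).IsRegular) (hunc : ℵ₀ < #K)
    (U : Ultrafilter K)
    (hcomp : ∀ S : Set (Set K), #S < #K → (∀ A ∈ S, A ∈ U) → ⋂₀ S ∈ U)
    (huni : ∀ A ∈ U, #A = #K) :
    ∀ n : ℕ,
      ((∃ f : {A : Set K // A ∈ U} → {A : Set (FubType K n) // A ∈ FubPow U n},
          IsCofinalMap (fun A B : {A : Set K // A ∈ U} => B.1 ⊆ A.1)
            (fun A B : {A : Set (FubType K n) // A ∈ FubPow U n} => B.1 ⊆ A.1) f) ∧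
        (∃ g : {A : Set (FubType K n) // A ∈ FubPow U n} → {A : Set K // A ∈ U},
          IsCofinalMap (fun A B : {A : Set (FubType K n) // A ∈ FubPow U n} => B.1 ⊆ A.1)
            (fun A B : {A : Set K // A ∈ U} => B.1 ⊆ A.1) g)) ∧
      (GalPow (K := K) {A | A ∈ U} → GalPow (K := K) (FubPow U n)) := by
  classical
  obtain ⟨E, hE, hdiag⟩ := exists_diag hunc U hcomp huni
  -- monotone maps from U to the Fubini powers with cofinal range
  have hF : ∀ n : ℕ, ∃ F : Set K → Set (FubType K n),
      (∀ A B, A ⊆ B → F A ⊆ F B) ∧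
      (∀ A, A ∈ U → F A ∈ FubPow U n) ∧
      (∀ C, C ∈ FubPow U n → ∃ A, A ∈ U ∧ F A ⊆ C) := by
    intro n
    induction n with
    | zero => exact ⟨id, fun A B h => h, fun A h => h, fun C hC => ⟨C, hC, subset_rfl⟩⟩
    | succ n ih =>
      obtain ⟨F, hmono, hmem, hcof⟩ := ih
      refine ⟨fun A => {p : K × FubType K n | p.1 ∈ A ∧ p.2 ∈ F (A ∩ E p.1)}, ?_, ?_, ?_⟩
      · intro A B hAB p hp
        exact ⟨hAB hp.1, hmono _ _ (Set.inter_subset_inter_left _ hAB) hp.2⟩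
      · intro A hA
        rw [mem_fubpow_succ]
        apply Filter.mem_of_superset hA
        intro α hα
        show {x | (α, x) ∈ _} ∈ FubPow U n
        have h2 : {x : FubType K n |
            (α, x) ∈ {p : K × FubType K n | p.1 ∈ A ∧ p.2 ∈ F (A ∩ E p.1)}}
            = F (A ∩ E α) := by
          ext x
          simp only [Set.mem_setOf_eq]
          exact ⟨fun h => h.2, fun h => ⟨hα, h⟩⟩
        have hm2 := hmem _ (Filter.inter_mem hA (hE α))
        rw [← h2] at hm2
        exact hm2
      · intro C hC
        rw [mem_fubpow_succ] at hC
        have hWex : ∀ α, ∃ B, B ∈ U ∧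
            ({x | (α, x) ∈ C} ∈ FubPow U n → F B ⊆ {x | (α, x) ∈ C}) := by
          intro α
          by_cases hα : {x : FubType K n | (α, x) ∈ C} ∈ FubPow U n
          · obtain ⟨B, hB, hBsub⟩ := hcof _ hα
            exact ⟨B, hB, fun _ => hBsub⟩
          · exact ⟨Set.univ, Filter.univ_mem, fun h => absurd h hα⟩
        choose W hWU hWsub using hWex
        have hΔ := hdiag W hWU
        refine ⟨{α | {x | (α, x) ∈ C} ∈ FubPow U n} ∩ {β | ∀ α, β ∈ E α → β ∈ W α},
          Filter.inter_mem hC hΔ, ?_⟩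
        rintro ⟨α, x⟩ ⟨hα, hx⟩
        have hsub : (({α | {x | (α, x) ∈ C} ∈ FubPow U n}
            ∩ {β | ∀ α, β ∈ E α → β ∈ W α}) ∩ E α) ⊆ W α := by
          rintro β ⟨⟨-, hβΔ⟩, hβE⟩
          exact hβΔ α hβE
        have hx2 : x ∈ F (W α) := hmono _ _ hsub hx
        exact hWsub α hα.1 hx2
  -- monotone maps from the Fubini powers to U with cofinal range
  have hG : ∀ n : ℕ, ∃ G : Set (FubType K n) → Set K,
      (∀ C D, C ⊆ D → G C ⊆ G D) ∧
      (∀ C, C ∈ FubPow U n → G C ∈ U) ∧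
      (∀ A, A ∈ U → ∃ C, C ∈ FubPow U n ∧ G C ⊆ A) := by
    intro n
    match n with
    | 0 => exact ⟨id, fun C D h => h, fun C h => h, fun A hA => ⟨A, hA, subset_rfl⟩⟩
    | n + 1 =>
      refine ⟨fun C => {α | {x | (α, x) ∈ C} ∈ FubPow U n}, ?_, ?_, ?_⟩
      · intro C D hCD α hα
        exact fub_mono U n hα (fun x hx => hCD hx)
      · intro C hC
        exact (mem_fubpow_succ).mp hC
      · intro A hA
        refine ⟨{p : K × FubType K n | p.1 ∈ A}, ?_, ?_⟩
        · rw [mem_fubpow_succ]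
          apply Filter.mem_of_superset hA
          intro α hα
          show {x | (α, x) ∈ _} ∈ FubPow U n
          have h2 : {x : FubType K n | (α, x) ∈ {p : K × FubType K n | p.1 ∈ A}}
              = Set.univ := Set.eq_univ_of_forall fun x => hα
          have hu := fub_univ U n
          rw [← h2] at hu
          exact hu
        · intro α hα
          by_contra hαA
          have h2 : {x : FubType K n | (α, x) ∈ {p : K × FubType K n | p.1 ∈ A}}
              = ∅ := by
            ext x
            simp only [Set.mem_setOf_eq, Set.mem_empty_iff_false, iff_false]
            exact hαA
          have he := fub_empty U n
          rw [← h2] at he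
          exact he hα
  have hcard : ∀ n : ℕ, #(FubType K n) = #K := by
    intro n
    induction n with
    | zero => rfl
    | succ n ih =>
      show #(K × FubType K n) = #K
      rw [Cardinal.mk_prod, Cardinal.lift_id, Cardinal.lift_id, ih,
        Cardinal.mul_eq_self hunc.le]
  intro n
  obtain ⟨F, hFmono, hFmem, hFcof⟩ := hF n
  obtain ⟨G, hGmono, hGmem, hGcof⟩ := hG n
  refine ⟨⟨⟨fun A => ⟨F A.1, hFmem _ A.2⟩, ?_⟩, ⟨fun C => ⟨G C.1, hGmem _ C.2⟩, ?_⟩⟩, ?_⟩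
  · intro S hS C
    obtain ⟨A, hA, hAC⟩ := hFcof C.1 C.2
    obtain ⟨B, hBS, hBA⟩ := hS ⟨A, hA⟩
    exact ⟨_, Set.mem_image_of_mem _ hBS, (hFmono _ _ hBA).trans hAC⟩
  · intro S hS A
    obtain ⟨C, hC, hCA⟩ := hGcof A.1 A.2
    obtain ⟨D, hDS, hDC⟩ := hS ⟨C, hC⟩
    exact ⟨_, Set.mem_image_of_mem _ hDS, (hGmono _ _ hDC).trans hCA⟩
  · intro hGal A hA
    obtain ⟨e⟩ : Nonempty (FubType K n ≃ K) := Cardinal.eq.mp (hcard n)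
    set eS : Set (FubType K n) ≃ Set K := Equiv.Set.congr e with heS
    choose A' hA'U hA'sub using fun s : Set (FubType K n) => hFcof (A s) (hA s)
    obtain ⟨I, hI, hIU⟩ := hGal (fun t => A' (eS.symm t)) (fun t => hA'U _)
    refine ⟨eS.symm '' I, ?_, ?_⟩
    · rw [Cardinal.mk_image_eq eS.symm.injective, hI]
    · have hmem : F (⋂ t ∈ I, A' (eS.symm t)) ∈ FubPow U n := hFmem _ hIU
      apply fub_mono U n hmem
      apply Set.subset_iInter₂
      rintro s ⟨t, htI, rfl⟩
      have h1 : (⋂ t ∈ I, A' (eS.symm t)) ⊆ A' (eS.symm t) :=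
        Set.biInter_subset_of_mem htI
      exact (hFmono _ _ h1).trans (hA'sub (eS.symm t))
end

section
/- Every basic κ-complete uniform ultrafilter on κ is a p-point: if U is κ-complete, uniform, and basic, then every κ-sequence ⟨X_i : i < κ⟩ of members of U has a pseudo-intersection X ∈ U (i.e., X ⊆* X_i for all i). -/
universe u

open Cardinal

variable {K : Type u} [LinearOrder K]

/-- The sequence `A : K → Set K` converges to `L` : for every `δ` the sequence is eventually
equal to `L` below `δ`. -/
def ConvergesTo (A : K → Set K) (L : Set K) : Prop :=
  ∀ δ : K, ∃ i₀ : K, ∀ i, i₀ ≤ i → A i ∩ {x | x < δ} = L ∩ {x | x < δ}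

/-- `U` is basic: every sequence of sets converging to a member of `U` has a `κ`-sized
(injectively indexed) subsequence whose intersection is in `U`. -/
def IsBasic (U : Ultrafilter K) : Prop :=
  ∀ (A : K → Set K) (L : Set K), L ∈ U → ConvergesTo A L →
    ∃ ι : K → K, Function.Injective ι ∧ (⋂ α, A (ι α)) ∈ U

/-- Every basic `κ`-complete uniform ultrafilter on an uncountable regular cardinal `κ`
(realized as a linear order `K` with no maximum in which sets of size `< κ` are bounded)
is a p-point: every `κ`-sequence of members of `U` has a pseudo-intersection in `U`. -/
theorem basic_implies_ppoint (hreg : (#K).IsRegular) (hunc : ℵ₀ < #K)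
    (hsmall : ∀ S : Set K, #S < #K → BddAbove S) (hnomax : ∀ x : K, ∃ y, x < y)
    (U : Ultrafilter K)
    (hcomp : ∀ S : Set (Set K), #S < #K → (∀ A ∈ S, A ∈ U) → ⋂₀ S ∈ U)
    (huni : ∀ A ∈ U, #A = #K)
    (hbasic : IsBasic U) :
    ∀ X : K → Set K, (∀ i, X i ∈ U) →
      ∃ Y ∈ U, ∀ i, BddAbove (Y \ X i) := by
  intro X hX
  classical
  obtain ⟨e⟩ : Nonempty (K ≃ ((#K).ord).ToType) := by
    rw [← Cardinal.eq]
    exact (Cardinal.mk_ord_toType #K).symm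
  set A : K → Set K := fun i => {x | x < i} ∪ ⋂ j ∈ {j : K | e j ≤ e i}, X j with hA
  have hconv : ConvergesTo A Set.univ := by
    intro δ
    refine ⟨δ, fun i hi => ?_⟩
    ext x
    simp only [hA, Set.mem_inter_iff, Set.mem_union, Set.mem_setOf_eq, Set.mem_univ, true_and]
    exact ⟨fun h => h.2, fun h => ⟨Or.inl (lt_of_lt_of_le h hi), h⟩⟩
  obtain ⟨ι, hι, hY⟩ := hbasic A Set.univ U.univ_mem hconv
  refine ⟨⋂ α, A (ι α), hY, fun j => ?_⟩
  have hcof : ∃ α, e j ≤ e (ι α) := by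
    by_contra h
    push_neg at h
    have inj : Function.Injective
        (fun α => (⟨e (ι α), h α⟩ : {y : ((#K).ord).ToType // y < e j})) := by
      intro a b hab
      exact hι (e.injective (congrArg Subtype.val hab))
    have h1 : #K ≤ #{y : ((#K).ord).ToType // y < e j} := Cardinal.mk_le_of_injective inj
    have h2 : #{y : ((#K).ord).ToType // y < e j} < #K := by
      haveI : IsWellOrder ((#K).ord).ToType (· < ·) := by constructor
      have := Cardinal.card_typein_toType_lt #K (e j)
      rwa [Ordinal.card_typein (r := ((· < ·) : ((#K).ord).ToType → ((#K).ord).ToType → Prop)) (e j)] at this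
    exact absurd h1 (not_le.2 h2)
  obtain ⟨α, hα⟩ := hcof
  refine ⟨ι α, fun x hx => ?_⟩
  obtain ⟨hx1, hx2⟩ := hx
  have hxA : x ∈ A (ι α) := Set.mem_iInter.1 hx1 α
  rcases hxA with h | h
  · exact le_of_lt h
  · exact absurd (Set.mem_iInter₂.1 h j hα) hx2
end

section
/- Let κ be an uncountable regular cardinal and let U be a basically generated ultrafilter on κ. Then U is not Tukey-top: for every family C ⊆ U with |C| = 2^κ there is a subfamily D ⊆ C with |D| = κ such that ⋂ D ∈ U (i.e., Gal(U, κ, 2^κ) holds). -/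
universe u

open Cardinal

variable {K : Type u} [LinearOrder K]

/-- `g` eventually dominates `f`. -/
def EvDom (f g : K → K) : Prop := ∃ θ : K, ∀ α, θ ≤ α → f α ≤ g α

/-- `U` is basically generated (uniform and `κ`-complete being assumed separately):
there is a filter base `B ⊆ U`, closed under intersections of `< κ` many members, such that
for every sequence in `B` converging to a member of `B` there is `f : κ → κ` with
`⋂_α A (g α) ∈ U` for every `g` eventually dominating `f`. -/
def IsBasicallyGenerated (U : Ultrafilter K) : Prop :=
  ∃ B : Set (Set K),
    (∀ b ∈ B, b ∈ U) ∧
    (∀ A ∈ U, ∃ b ∈ B, b ⊆ A) ∧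
    (∀ S : Set (Set K), S ⊆ B → S.Nonempty → #S < #K → ⋂₀ S ∈ B) ∧
    (∀ (A : K → Set K) (L : Set K), (∀ i, A i ∈ B) → L ∈ B → ConvergesTo A L →
      ∃ f : K → K, ∀ g : K → K, EvDom f g → (⋂ α, A (g α)) ∈ U)

private lemma aux_reg {α β : Type u} {c : Cardinal.{u}} (hreg : c.IsRegular)
    (f : α → β) (hβ : #β < c) (h : ∀ b : β, #(f ⁻¹' {b}) < c) : #α < c := by
  have e : #α = Cardinal.sum (fun b : β => #(f ⁻¹' {b})) := by
    rw [← Cardinal.mk_sigma]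
    exact (Cardinal.mk_congr (Equiv.sigmaFiberEquiv f)).symm
  rw [e]
  exact Cardinal.sum_lt_of_isRegular hreg hβ h

/-- A basically generated (uniform, `κ`-complete) ultrafilter on an uncountable regular
cardinal `κ` is not Tukey-top: `Gal(U, κ, 2^κ)` holds, i.e. every family of `2^κ` many
members of `U` has a subfamily of size `κ` whose intersection is in `U`. -/
theorem basicallyGenerated_not_tukey_top (hreg : (#K).IsRegular) (hunc : ℵ₀ < #K)
    (U : Ultrafilter K)
    (hcomp : ∀ S : Set (Set K), #S < #K → (∀ A ∈ S, A ∈ U) → ⋂₀ S ∈ U)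
    (huni : ∀ A ∈ U, #A = #K)
    (hbg : IsBasicallyGenerated U) :
    ∀ C : Set (Set K), (∀ A ∈ C, A ∈ U) → #C = 2 ^ #K →
      ∃ D ⊆ C, #D = #K ∧ ⋂₀ D ∈ U := by
  classical
  obtain ⟨B, hBU, hbase, hBclosed, hBconv⟩ := hbg
  intro C hC hCcard
  have hKne : Nonempty K := Cardinal.mk_ne_zero_iff.mp (aleph0_pos.trans hunc).ne'
  have hup : ∀ {s t : Set K}, s ∈ U → s ⊆ t → t ∈ U := by
    intro s t hs hst
    exact Ultrafilter.mem_coe.mp (Filter.mem_of_superset (Ultrafilter.mem_coe.mpr hs) hst)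
  have h2K : (2 : Cardinal) ≤ #K := by
    refine le_trans ?_ hunc.le
    exact_mod_cast (Cardinal.nat_lt_aleph0 2).le
  -- the choice of base elements below members of `C`
  have hβex : ∀ A : Set K, ∃ b : Set K, A ∈ C → (b ∈ B ∧ b ⊆ A) := by
    intro A
    by_cases h : A ∈ C
    · obtain ⟨b, hb, hba⟩ := hbase A (hC A h)
      exact ⟨b, fun _ => ⟨hb, hba⟩⟩
    · exact ⟨∅, fun h' => absurd h' h⟩
  set β : Set K → Set K := fun A => (hβex A).choose with hβdef
  have hβ : ∀ A ∈ C, β A ∈ B ∧ β A ⊆ A := fun A hA => (hβex A).choose_spec hA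
  by_cases hshape : ∀ θ : K, #{x : K | x < θ} < #K
  case neg =>
    -- Case 1 : some initial segment has full size
    push_neg at hshape
    obtain ⟨θ₀, hθ₀⟩ := hshape
    have hSle : #({x : K | x < θ₀}) ≤ #K := Cardinal.mk_set_le _
    have hCKle : #K ≤ #C := by rw [hCcard]; exact (Cardinal.cantor _).le
    have hι : Nonempty ({x : K | x < θ₀} ↪ C) := by
      rw [← Cardinal.le_def]; exact hSle.trans hCKle
    obtain ⟨ι⟩ := hι
    have hLex := hbase Set.univ Filter.univ_mem
    set L : Set K := hLex.choose with hLdef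
    obtain ⟨hLB, -⟩ := hLex.choose_spec
    set A : K → Set K := fun i => if h : i < θ₀ then β ↑(ι ⟨i, h⟩) else L with hAdef
    have hAB : ∀ i, A i ∈ B := by
      intro i
      by_cases h : i < θ₀
      · rw [show A i = β ↑(ι ⟨i, h⟩) from dif_pos h]
        exact (hβ _ (ι ⟨i, h⟩).2).1
      · rw [show A i = L from dif_neg h]
        exact hLB
    have hconv : ConvergesTo A L := by
      intro δ
      exact ⟨θ₀, fun i hi => by rw [show A i = L from dif_neg (not_lt.mpr hi)]⟩
    obtain ⟨f, hf⟩ := hBconv A L hAB hLB hconv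
    set g : K → K := fun α => if α < θ₀ then α else f α with hgdef
    have hev : EvDom f g := by
      refine ⟨θ₀, fun α hα => ?_⟩
      rw [show g α = f α from if_neg (not_lt.mpr hα)]
    have HU : (⋂ α, A (g α)) ∈ U := hf g hev
    refine ⟨Set.range (fun s : {x : K | x < θ₀} => ((ι s : Set K))), ?_, ?_, ?_⟩
    · rintro _ ⟨s, rfl⟩
      exact (ι s).2
    · have hinj : Function.Injective (fun s : {x : K | x < θ₀} => ((ι s : Set K))) := by
        intro a b h
        exact ι.injective (Subtype.ext h)
      rw [Cardinal.mk_range_eq _ hinj]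
      exact le_antisymm hSle hθ₀
    · refine hup HU ?_
      intro x hx
      rintro c ⟨s, rfl⟩
      have hx' : x ∈ A (g ↑s) := Set.mem_iInter.mp hx ↑s
      have hgs : g ↑s = ↑s := if_pos s.2
      rw [hgs] at hx'
      have hAs : A ↑s = β ↑(ι ⟨↑s, s.2⟩) := dif_pos s.2
      rw [hAs] at hx'
      have : (⟨↑s, s.2⟩ : {x : K | x < θ₀}) = s := rfl
      rw [this] at hx'
      exact (hβ _ (ι s).2).2 hx'
  case pos =>
    -- Case 2 : all initial segments are small ("κ-like" order)
    have hsmall := hshape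
    -- small subsets are bounded
    have hbdd : ∀ T : Set K, #T < #K → ∃ M : K, ∀ t ∈ T, t < M := by
      intro T hT
      by_contra hcon
      push_neg at hcon
      have hch : ∀ M : K, ∃ t : T, M ≤ (t : K) := by
        intro M
        obtain ⟨t, htT, ht⟩ := hcon M
        exact ⟨⟨t, htT⟩, ht⟩
      set ch : K → T := fun M => (hch M).choose with hchdef
      have hchle : ∀ M : K, M ≤ ((ch M : K)) := fun M => (hch M).choose_spec
      have : #K < #K := by
        refine aux_reg hreg ch hT ?_
        intro t
        have hsub : (ch ⁻¹' {t}) ⊆ {x : K | x ≤ (t : K)} := by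
          intro M hM
          have : ch M = t := hM
          have := hchle M
          rw [hM] at this
          exact this
        refine lt_of_le_of_lt (Cardinal.mk_le_mk_of_subset hsub) ?_
        have hins : {x : K | x ≤ (t : K)} ⊆ insert (t : K) {x : K | x < (t : K)} := by
          intro x hx
          rcases lt_or_eq_of_le hx with h | h
          · exact Set.mem_insert_of_mem _ h
          · rw [h]; exact Set.mem_insert _ _
        refine lt_of_le_of_lt (Cardinal.mk_le_mk_of_subset hins) ?_
        refine lt_of_le_of_lt Cardinal.mk_insert_le ?_
        exact Cardinal.add_lt_of_lt hreg.1 (hsmall _) (one_lt_aleph0.trans hunc)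
      exact absurd this (lt_irrefl _)
    -- strong limit: κ is inaccessible
    have hSL : ∀ T : Set K, #T < #K → (2 : Cardinal) ^ #T < #K := by
      intro T hT
      by_contra hcon
      rw [not_lt] at hcon
      have : #K ≤ #(Set T) := by rwa [Cardinal.mk_set]
      rw [Cardinal.le_def] at this
      obtain ⟨j⟩ := this
      set E : T → Set K := fun t => {x : K | t ∈ j x} with hEdef
      set E' : T → Set K := fun t => if E t ∈ U then E t else (E t)ᶜ with hE'def
      have hE' : ∀ t, E' t ∈ U := by
        intro t
        by_cases h : E t ∈ U
        · rwa [show E' t = E t from if_pos h]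
        · rw [show E' t = (E t)ᶜ from if_neg h]
          exact (Ultrafilter.compl_mem_iff_notMem).mpr h
      have hI : ⋂₀ (Set.range E') ∈ U := by
        refine hcomp _ (lt_of_le_of_lt Cardinal.mk_range_le hT) ?_
        rintro _ ⟨t, rfl⟩
        exact hE' t
      have hcard : #(⋂₀ (Set.range E') : Set K) = #K := huni _ hI
      have h2 : (2 : Cardinal) ≤ #(⋂₀ (Set.range E') : Set K) := by rw [hcard]; exact h2K
      obtain ⟨x, y, hxy⟩ := Cardinal.two_le_iff.mp h2
      have hjeq : j (x : K) = j (y : K) := by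
        ext t
        have hxE : (x : K) ∈ E' t := x.2 _ ⟨t, rfl⟩
        have hyE : (y : K) ∈ E' t := y.2 _ ⟨t, rfl⟩
        by_cases h : E t ∈ U
        · rw [show E' t = E t from if_pos h] at hxE hyE
          exact ⟨fun _ => hyE, fun _ => hxE⟩
        · rw [show E' t = (E t)ᶜ from if_neg h] at hxE hyE
          exact ⟨fun hc => absurd hc hxE, fun hc => absurd hc hyE⟩
      exact hxy (Subtype.ext (j.injective hjeq))
    -- every point has a strict upper bound
    have hδex : ∀ i : K, ∃ δ : K, i < δ := by
      intro i
      obtain ⟨M, hM⟩ := hbdd {i} (by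
        rw [Cardinal.mk_singleton]; exact one_lt_aleph0.trans hunc)
      exact ⟨M, hM i rfl⟩
    set δfun : K → K := fun i => (hδex i).choose with hδfundef
    have hδfun : ∀ i, i < δfun i := fun i => (hδex i).choose_spec
    -- dichotomy
    by_cases hbig : ∃ b ∈ B, #K ≤ #{A : Set K | A ∈ C ∧ b ⊆ A}
    · obtain ⟨b, hbB, hble⟩ := hbig
      obtain ⟨D, hDsub, hDcard⟩ := Cardinal.le_mk_iff_exists_subset.mp hble
      refine ⟨D, fun A hA => (hDsub hA).1, hDcard, ?_⟩
      exact hup (hBU b hbB) (Set.subset_sInter fun A hA => (hDsub hA).2)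
    push_neg at hbig
    set X : Set (Set K) := β '' C with hXdef
    have hXB : ∀ s ∈ X, s ∈ B := by
      rintro _ ⟨A, hA, rfl⟩
      exact (hβ A hA).1
    have hXbig : #K < #X := by
      by_contra hle
      rw [not_lt] at hle
      set F1 : C → X := fun A => ⟨β ↑A, Set.mem_image_of_mem β A.2⟩ with hF1def
      have hfib : ∀ s : X, #(F1 ⁻¹' {s}) ≤ #K := by
        intro s
        have : #(F1 ⁻¹' {s}) ≤ #{A : Set K | A ∈ C ∧ (s : Set K) ⊆ A} := by
          refine Cardinal.mk_le_of_injective (f := fun A =>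
            ⟨((A : C) : Set K), (A : C).2, ?_⟩) ?_
          · have hv : β ((A : C) : Set K) = (s : Set K) := congrArg Subtype.val A.2
            rw [← hv]
            exact (hβ _ (A : C).2).2
          · intro a b h
            have h2 : ((a : C) : Set K) = ((b : C) : Set K) := by
              simpa using congrArg Subtype.val h
            exact Subtype.ext (Subtype.ext h2)
        exact this.trans (hbig _ (hXB _ s.2)).le
      have := Cardinal.mk_le_mk_mul_of_mk_preimage_le F1 hfib
      have h1 : #C ≤ #K := by
        refine this.trans ?_
        calc #X * #K ≤ #K * #K := by
              exact mul_le_mul_left hle _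
          _ = #K := Cardinal.mul_eq_self hreg.1
      rw [hCcard] at h1
      exact absurd h1 (Cardinal.cantor _).not_ge
    -- the classes of sets with a common trace
    set cls : Set K → K → Set (Set K) := fun b δ =>
      {s : Set K | s ∈ X ∧ s ∩ {x : K | x < δ} = b ∩ {x : K | x < δ}} with hclsdef
    have hstar : ∃ b ∈ X, ∀ δ : K, #K ≤ #(cls b δ) := by
      by_contra hcon
      push_neg at hcon
      have hd : ∀ s : X, ∃ δ : K, #(cls (s : Set K) δ) < #K := fun s => hcon _ s.2
      set d : X → K := fun s => (hd s).choose with hddef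
      have hdspec : ∀ s : X, #(cls (s : Set K) (d s)) < #K := fun s => (hd s).choose_spec
      set T : Set (K × Set K) := {p | p.2 ⊆ {x : K | x < p.1}} with hTdef
      -- `T` is small
      have hTsmall : #T ≤ #K := by
        set F3 : T → K := fun p => (p : K × Set K).1 with hF3def
        have hfib3 : ∀ δ : K, #(F3 ⁻¹' {δ}) ≤ #K := by
          intro δ
          have hle : #(F3 ⁻¹' {δ}) ≤ #(𝒫 {x : K | x < δ} : Set (Set K)) := by
            refine Cardinal.mk_le_of_injective (f := fun p =>
              ⟨((p : T) : K × Set K).2, ?_⟩) ?_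
            · have hmem : ((p : T) : K × Set K).2 ⊆ {x : K | x < ((p : T) : K × Set K).1} :=
                (p : T).2
              have hfst : ((p : T) : K × Set K).1 = δ := p.2
              rw [hfst] at hmem
              exact hmem
            · intro a b h
              have h2 : ((a : T) : K × Set K).2 = ((b : T) : K × Set K).2 := by
                simpa using congrArg Subtype.val h
              have h1 : ((a : T) : K × Set K).1 = ((b : T) : K × Set K).1 := by
                have ha : ((a : T) : K × Set K).1 = δ := a.2
                have hb : ((b : T) : K × Set K).1 = δ := b.2
                rw [ha, hb]
              exact Subtype.ext (Subtype.ext (Prod.ext h1 h2))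
          refine hle.trans ?_
          rw [Cardinal.mk_powerset]
          exact (hSL _ (hsmall δ)).le
        have := Cardinal.mk_le_mk_mul_of_mk_preimage_le F3 hfib3
        refine this.trans ?_
        rw [Cardinal.mul_eq_self hreg.1]
      -- the trace map from `X` to `T` has small fibers
      set F2 : X → T := fun s => ⟨(d s, (s : Set K) ∩ {x : K | x < d s}),
        Set.inter_subset_right⟩ with hF2def
      have hfib2 : ∀ t : T, #(F2 ⁻¹' {t}) ≤ #K := by
        intro t
        rcases Set.eq_empty_or_nonempty (F2 ⁻¹' {t}) with hemp | ⟨s₀, hs₀⟩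
        · rw [hemp]
          simp only [Cardinal.mk_emptyCollection]
          exact le_of_lt (aleph0_pos.trans hunc)
        · have hle : #(F2 ⁻¹' {t}) ≤ #(cls (s₀ : Set K) (d s₀)) := by
            refine Cardinal.mk_le_of_injective (f := fun s =>
              ⟨((s : X) : Set K), ((s : X).2 : ((s : X) : Set K) ∈ X), ?_⟩) ?_
            · have hF : F2 (s : X) = F2 s₀ := by
                have h1 : F2 (s : X) = t := s.2
                have h2 : F2 s₀ = t := hs₀
                rw [h1, h2]
              have hval := congrArg Subtype.val hF
              have hfst : d (s : X) = d s₀ := congrArg Prod.fst hval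
              have hsnd : ((s : X) : Set K) ∩ {x : K | x < d (s : X)}
                  = ((s₀ : X) : Set K) ∩ {x : K | x < d s₀} := congrArg Prod.snd hval
              rw [hfst] at hsnd
              exact hsnd
            · intro a b h
              have h2 : ((a : X) : Set K) = ((b : X) : Set K) := by
                simpa using congrArg Subtype.val h
              exact Subtype.ext (Subtype.ext h2)
          exact hle.trans (hdspec s₀).le
      have := Cardinal.mk_le_mk_mul_of_mk_preimage_le F2 hfib2
      have hXle : #X ≤ #K := by
        refine this.trans ?_
        calc #T * #K ≤ #K * #K := mul_le_mul_left hTsmall _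
          _ = #K := Cardinal.mul_eq_self hreg.1
      exact absurd hXle hXbig.not_ge
    obtain ⟨bstar, hbstarX, hcls⟩ := hstar
    -- pick, for each `i`, a set in the class at level `δfun i`, different from `bstar`
    have hypool : ∀ i : K, ∃ s : Set K, (s ∈ cls bstar (δfun i)) ∧ s ≠ bstar := by
      intro i
      have h2 : (2 : Cardinal) ≤ #(cls bstar (δfun i)) := h2K.trans (hcls _)
      obtain ⟨u, v, huv⟩ := Cardinal.two_le_iff.mp h2
      by_cases hcase : (u : Set K) = bstar
      · refine ⟨v, v.2, fun h => huv (Subtype.ext (hcase.trans h.symm))⟩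
      · exact ⟨u, u.2, hcase⟩
    set y : K → Set K := fun i => (hypool i).choose with hydef
    have hy : ∀ i, y i ∈ cls bstar (δfun i) ∧ y i ≠ bstar := fun i => (hypool i).choose_spec
    have hyX : ∀ i, y i ∈ X := fun i => (hy i).1.1
    have hytr : ∀ i, y i ∩ {x : K | x < δfun i} = bstar ∩ {x : K | x < δfun i} :=
      fun i => (hy i).1.2
    -- the convergent sequence
    set Aseq : K → Set K := fun i => y i ∩ bstar with hAseqdef
    have hAseqB : ∀ i, Aseq i ∈ B := by
      intro i
      have he : Aseq i = ⋂₀ {y i, bstar} := by rw [Set.sInter_pair]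
      rw [he]
      refine hBclosed _ ?_ ⟨y i, Set.mem_insert _ _⟩ ?_
      · rintro s hs
        rcases hs with h | h
        · rw [h]; exact hXB _ (hyX i)
        · rw [Set.mem_singleton_iff.mp h]; exact hXB _ hbstarX
      · have hle2 : #({y i, bstar} : Set (Set K)) ≤ 2 := by
          calc #({y i, bstar} : Set (Set K)) ≤ #({bstar} : Set (Set K)) + 1 :=
                Cardinal.mk_insert_le
            _ = 1 + 1 := by rw [Cardinal.mk_singleton]
            _ = 2 := one_add_one_eq_two
        have h2a : (2 : Cardinal) < ℵ₀ := by exact_mod_cast Cardinal.nat_lt_aleph0 2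
        exact lt_of_le_of_lt hle2 (h2a.trans hunc)
    have hconv : ConvergesTo Aseq bstar := by
      intro δ
      refine ⟨δ, fun i hδi => ?_⟩
      ext x
      constructor
      · rintro ⟨⟨-, hxb⟩, hxδ⟩
        exact ⟨hxb, hxδ⟩
      · rintro ⟨hxb, hxδ⟩
        have hxδf : x < δfun i := ((lt_of_lt_of_le hxδ hδi).trans (hδfun i))
        have hmem : x ∈ bstar ∩ {z : K | z < δfun i} := ⟨hxb, hxδf⟩
        rw [← hytr i] at hmem
        exact ⟨⟨hmem.1, hxb⟩, hxδ⟩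
    obtain ⟨f, hf⟩ := hBconv Aseq bstar hAseqB (hXB _ hbstarX) hconv
    set g : K → K := fun α => max (f α) α with hgdef
    have HU : (⋂ α, Aseq (g α)) ∈ U := hf g ⟨Classical.arbitrary K, fun α _ => le_max_left _ _⟩
    -- the range of `g` is large
    have hrange : #K ≤ #(Set.range g) := by
      by_contra hcon
      rw [not_le] at hcon
      obtain ⟨M, hM⟩ := hbdd _ hcon
      have h1 : g M < M := hM _ ⟨M, rfl⟩
      exact absurd h1 (not_lt.mpr (le_max_right _ _))
    -- fibers of `y` are small
    set E : Set (Set K) := y '' Set.range g with hEdef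
    have hEX : E ⊆ X := by rintro _ ⟨i, -, rfl⟩; exact hyX i
    have hyfib : ∀ s ∈ E, #(y ⁻¹' {s}) < #K := by
      intro s hs
      obtain ⟨i₀, -, hi₀⟩ := hs
      have hsne : s ≠ bstar := hi₀ ▸ (hy i₀).2
      have hpex : ∃ p : K, ¬(p ∈ s ↔ p ∈ bstar) := by
        by_contra hall
        push_neg at hall
        exact hsne (Set.ext fun p => hall p)
      obtain ⟨p, hp⟩ := hpex
      have hsub : y ⁻¹' {s} ⊆ {x : K | x < p} := by
        intro i hi
        have hyi : y i = s := hi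
        have hple : δfun i ≤ p := by
          by_contra hnp
          rw [not_le] at hnp
          have hiff := Set.ext_iff.mp (hytr i) p
          rw [hyi] at hiff
          refine hp ?_
          constructor
          · intro hps
            exact (hiff.mp ⟨hps, hnp⟩).1
          · intro hpb
            exact (hiff.mpr ⟨hpb, hnp⟩).1
        exact lt_of_lt_of_le (hδfun i) hple
      exact lt_of_le_of_lt (Cardinal.mk_le_mk_of_subset hsub) (hsmall p)
    -- the image of the range of `g` under `y` is large
    have hEge : #K ≤ #E := by
      by_contra hcon
      rw [not_le] at hcon
      set m : Set.range g → E := fun r => ⟨y ↑r, Set.mem_image_of_mem y r.2⟩ with hmdef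
      have hsmall' : #(Set.range g) < #K := by
        refine aux_reg hreg m hcon ?_
        intro s
        have hle : #(m ⁻¹' {s}) ≤ #(y ⁻¹' {(s : Set K)}) := by
          refine Cardinal.mk_le_of_injective (f := fun r => ⟨((r : Set.range g) : K), ?_⟩) ?_
          · have : m (r : Set.range g) = s := r.2
            have := congrArg Subtype.val this
            simpa using this
          · intro a b h
            have h2 : ((a : Set.range g) : K) = ((b : Set.range g) : K) := by
              simpa using congrArg Subtype.val h
            exact Subtype.ext (Subtype.ext h2)
        exact lt_of_le_of_lt hle (hyfib _ s.2)
      exact absurd hrange hsmall'.not_ge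
    have hEle : #E ≤ #K := by
      rw [hEdef, ← Set.range_comp]
      exact Cardinal.mk_range_le
    -- pull back from traces to members of `C`
    have hqex : ∀ s : Set K, ∃ A : Set K, s ∈ X → (A ∈ C ∧ β A = s) := by
      intro s
      by_cases h : s ∈ X
      · obtain ⟨A, hA, hAs⟩ := h
        exact ⟨A, fun _ => ⟨hA, hAs⟩⟩
      · exact ⟨∅, fun h' => absurd h' h⟩
    set q : Set K → Set K := fun s => (hqex s).choose with hqdef
    have hq : ∀ s ∈ X, q s ∈ C ∧ β (q s) = s := fun s hs => (hqex s).choose_spec hs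
    refine ⟨q '' E, ?_, ?_, ?_⟩
    · rintro _ ⟨s, hs, rfl⟩
      exact (hq s (hEX hs)).1
    · have hinj : Set.InjOn q E := by
        intro a ha b hb h
        rw [← (hq a (hEX ha)).2, ← (hq b (hEX hb)).2, h]
      rw [Cardinal.mk_image_eq_of_injOn q E hinj]
      exact le_antisymm hEle hEge
    · refine hup HU ?_
      intro x hx
      rintro c ⟨s, hsE, rfl⟩
      obtain ⟨i, hig, hyi⟩ := hsE
      obtain ⟨α₀, hα₀⟩ := hig
      have hx' : x ∈ Aseq (g α₀) := Set.mem_iInter.mp hx α₀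
      have hxy : x ∈ y (g α₀) := hx'.1
      rw [hα₀, hyi] at hxy
      have hsX : s ∈ X := hEX ⟨i, ⟨α₀, hα₀⟩, hyi⟩
      rw [← (hq s hsX).2] at hxy
      exact (hβ (q s) (hq s hsX).1).2 hxy
end
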